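/- arXiv:1905.00073 — 5 statements merged into one kernel-verified Lean document; each statement's English description precedes it below -/
import Mathlib

section
/- If U is a linear code over a field F with generator matrix G and parity check matrix H, and the hull U ∩ U⊥ is trivial, then the matrix G·Gᵀ is invertible. -/
open Matrix

/-- The orthogonal complement (dual code) of a linear code `U ⊆ F^n` with respect to the
standard bilinear form `⟨x, y⟩ = ∑ i, x i * y i`. -/
def dualCode {F : Type*} [Field F] {n : ℕ} (U : Submodule F (Fin n → F)) :
    Submodule F (Fin n → F) where
  carrier := {z | ∀ u ∈ U, ∑ i, u i * z i = 0}
  add_mem' := by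
    intro a b ha hb u hu
    have h1 := ha u hu
    have h2 := hb u hu
    simp only [Set.mem_setOf_eq] at *
    calc ∑ i, u i * (a + b) i = (∑ i, u i * a i) + ∑ i, u i * b i := by
          rw [← Finset.sum_add_distrib]
          exact Finset.sum_congr rfl fun i _ => by simp [mul_add]
      _ = 0 := by rw [h1, h2, add_zero]
  zero_mem' := by
    intro u hu
    simp
  smul_mem' := by
    intro c a ha u hu
    have h := ha u hu
    simp only [Set.mem_setOf_eq] at *
    calc ∑ i, u i * (c • a) i = c * ∑ i, u i * a i := by
          rw [Finset.mul_sum]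
          exact Finset.sum_congr rfl fun i _ => by simp [smul_eq_mul]; ring
      _ = 0 := by rw [h, mul_zero]

/-- If `U` is a linear code over a field `F` with generator matrix `G` and
parity check matrix `H`, and the hull `U ⊓ U⊥` is trivial, then `G * Gᵀ` is invertible. -/
theorem statement0 {F : Type*} [Field F] {n k : ℕ}
    (U : Submodule F (Fin n → F))
    (G : Matrix (Fin k) (Fin n) F) (H : Matrix (Fin (n - k)) (Fin n) F)
    (hGind : LinearIndependent F G)
    (hGspan : Submodule.span F (Set.range G) = U)
    (hHind : LinearIndependent F H)
    (hHspan : Submodule.span F (Set.range H) = dualCode U)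
    (hhull : U ⊓ dualCode U = ⊥) :
    IsUnit (G * Gᵀ) := by
  rw [← Matrix.mulVec_injective_iff_isUnit]
  have key : ∀ x : Fin k → F, (G * Gᵀ) *ᵥ x = 0 → x = 0 := by
    intro x hx
    set v : Fin n → F := Gᵀ *ᵥ x with hv
    have hGv : G *ᵥ v = 0 := by
      rw [hv, Matrix.mulVec_mulVec]; exact hx
    have hveq : v = ∑ i, x i • G i := by
      funext j
      simp [hv, Matrix.mulVec, dotProduct, Matrix.transpose_apply, mul_comm]
    have hvU : v ∈ U := by
      rw [← hGspan, hveq]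
      exact Submodule.sum_smul_mem _ _ fun i _ =>
        Submodule.subset_span (Set.mem_range_self i)
    have hvD : v ∈ dualCode U := by
      intro u hu
      rw [← hGspan] at hu
      induction hu using Submodule.span_induction with
      | mem w hw =>
        obtain ⟨r, rfl⟩ := hw
        have := congrFun hGv r
        simpa [Matrix.mulVec, dotProduct] using this
      | zero => simp
      | add a b _ _ ha hb =>
        have : ∑ i, (a + b) i * v i = (∑ i, a i * v i) + ∑ i, b i * v i := by
          rw [← Finset.sum_add_distrib]
          exact Finset.sum_congr rfl fun i _ => by simp [add_mul]
        rw [this, ha, hb, add_zero]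
      | smul c a _ ha =>
        have : ∑ i, (c • a) i * v i = c * ∑ i, a i * v i := by
          rw [Finset.mul_sum]
          exact Finset.sum_congr rfl fun i _ => by simp [mul_assoc]
        rw [this, ha, mul_zero]
    have hv0 : v = 0 := by
      have : v ∈ U ⊓ dualCode U := ⟨hvU, hvD⟩
      rwa [hhull, Submodule.mem_bot] at this
    have hsum : ∑ i, x i • G i = 0 := by rw [← hveq, hv0]
    funext i
    exact Fintype.linearIndependent_iff.mp hGind x hsum i
  intro x y hxy
  have : (G * Gᵀ) *ᵥ (x - y) = 0 := by
    rw [Matrix.mulVec_sub, hxy, sub_self]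
  exact sub_eq_zero.mp (key _ this)
end

section
/- For a linear code U with trivial hull, generator matrix G, and parity check matrix H (so that H·Hᵀ is also invertible), one has Σ_U + Σ_{U⊥} = I_n, where Σ_U = Gᵀ(G·Gᵀ)⁻¹G and Σ_{U⊥} = Hᵀ(H·Hᵀ)⁻¹H. -/
/-! The rows of `H` are orthogonal to those of `G`, so `P = Gᵀ(GGᵀ)⁻¹G` and `Q = Hᵀ(HHᵀ)⁻¹H`
satisfy `P Gᵀ = Gᵀ`, `Q Hᵀ = Hᵀ` and `P Hᵀ = 0 = Q Gᵀ`; hence `P + Q` fixes `U + U⊥`, which is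
all of `Fⁿ` because `U ∩ U⊥ = 0` and `dim U + dim U⊥ = k + (n - k) = n`.
The Gram matrices are invertible because a kernel vector `c` of `GGᵀ` makes `cG` lie in the
hull `U ∩ U⊥`; the hull of `U⊥` is `U⊥ ∩ U⊥⊥ = (U + U⊥)⊥ = 0` as well. -/

open Matrix

open Submodule Set

section DualCode

variable {F : Type*} [Field F] {n : ℕ}

theorem mem_dualCode_iff {U : Submodule F (Fin n → F)} {z : Fin n → F} :
    z ∈ dualCode U ↔ ∀ u ∈ U, u ⬝ᵥ z = 0 :=
  Iff.rfl

theorem mem_dualCode_span_iff {s : Set (Fin n → F)} {z : Fin n → F} :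
    z ∈ dualCode (span F s) ↔ ∀ u ∈ s, u ⬝ᵥ z = 0 := by
  rw [mem_dualCode_iff]
  refine ⟨fun h u hu => h u (subset_span hu), fun h u hu => ?_⟩
  induction hu using span_induction with
  | mem u hu => exact h u hu
  | zero => exact zero_dotProduct z
  | add u v _ _ hu hv => rw [add_dotProduct, hu, hv, add_zero]
  | smul c u _ hu => rw [smul_dotProduct, hu, smul_zero]

theorem dualCode_sup (V W : Submodule F (Fin n → F)) :
    dualCode (V ⊔ W) = dualCode V ⊓ dualCode W := by
  ext z
  simp only [mem_inf, mem_dualCode_iff]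
  refine ⟨fun h => ⟨fun v hv => h v (mem_sup_left hv), fun w hw => h w (mem_sup_right hw)⟩,
    fun ⟨hV, hW⟩ x hx => ?_⟩
  obtain ⟨v, hv, w, hw, rfl⟩ := mem_sup.1 hx
  rw [add_dotProduct, hV v hv, hW w hw, add_zero]

theorem dualCode_top : dualCode (⊤ : Submodule F (Fin n → F)) = ⊥ := by
  refine eq_bot_iff.2 fun z hz => (mem_bot F).2 <| funext fun i => ?_
  simpa using mem_dualCode_iff.1 hz (Pi.single i 1) mem_top

theorem dualCode_inf_dualCode_dualCode_eq_bot {U : Submodule F (Fin n → F)}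
    (hU : U ⊔ dualCode U = ⊤) : dualCode U ⊓ dualCode (dualCode U) = ⊥ := by
  rw [← dualCode_sup, hU, dualCode_top]

theorem mul_transpose_eq_zero_of_mem_dualCode {ι κ : Type*}
    {U : Submodule F (Fin n → F)} {G : Matrix ι (Fin n) F} {H : Matrix κ (Fin n) F}
    (hG : ∀ j, G j ∈ U) (hH : ∀ i, H i ∈ dualCode U) : H * Gᵀ = 0 := by
  ext i j
  rw [mul_apply', Matrix.zero_apply, dotProduct_comm]
  exact mem_dualCode_iff.1 (hH i) _ (hG j)

end DualCode

namespace Matrix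

variable {F : Type*} [Field F] {ι κ : Type*} {n : ℕ}

theorem isUnit_det_mul_transpose_of_inf_dualCode_eq_bot [Fintype ι] [DecidableEq ι]
    (G : Matrix ι (Fin n) F) (hind : LinearIndependent F G)
    (hhull : span F (range G) ⊓ dualCode (span F (range G)) = ⊥) :
    IsUnit (G * Gᵀ).det := by
  rw [isUnit_iff_ne_zero, Ne, ← exists_mulVec_eq_zero_iff]
  rintro ⟨c, hc0, hc⟩
  have hmem : c ᵥ* G ∈ span F (range G) := range_vecMulLinear G ▸ ⟨c, rfl⟩
  have hdual : c ᵥ* G ∈ dualCode (span F (range G)) := by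
    refine mem_dualCode_span_iff.2 ?_
    rintro _ ⟨j, rfl⟩
    rw [← mulVec_transpose]
    exact congrFun (by rw [mulVec_mulVec, hc] : G *ᵥ (Gᵀ *ᵥ c) = 0) j
  have hzero : c ᵥ* G = 0 := by
    simpa [hhull] using (mem_inf.2 ⟨hmem, hdual⟩ : c ᵥ* G ∈ _)
  exact hc0 (vecMul_injective_iff.2 hind (hzero.trans (zero_vecMul G).symm))

theorem transpose_mul_inv_mul_mul_transpose [Fintype ι] [DecidableEq ι]
    {G : Matrix ι (Fin n) F} (hG : IsUnit (G * Gᵀ).det) : Gᵀ * (G * Gᵀ)⁻¹ * G * Gᵀ = Gᵀ := by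
  rw [Matrix.mul_assoc, Matrix.mul_assoc, nonsing_inv_mul _ hG, Matrix.mul_one]

theorem span_range_le_ker_of_mul_transpose_eq (M : Matrix (Fin n) (Fin n) F)
    {G : Matrix ι (Fin n) F} (hG : M * Gᵀ = Gᵀ) :
    span F (range G) ≤ LinearMap.ker (M.mulVecLin - LinearMap.id) := by
  refine span_le.2 ?_
  rintro _ ⟨j, rfl⟩
  exact sub_eq_zero.2 (funext fun i => congrFun (congrFun hG i) j)

theorem eq_one_of_mul_transpose_eq (M : Matrix (Fin n) (Fin n) F)
    {G : Matrix ι (Fin n) F} {H : Matrix κ (Fin n) F}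
    (hG : M * Gᵀ = Gᵀ) (hH : M * Hᵀ = Hᵀ)
    (hspan : span F (range G) ⊔ span F (range H) = ⊤) : M = 1 := by
  have hker : LinearMap.ker (M.mulVecLin - LinearMap.id) = ⊤ := top_le_iff.1 <|
    hspan ▸ sup_le (span_range_le_ker_of_mul_transpose_eq M hG)
      (span_range_le_ker_of_mul_transpose_eq M hH)
  have : M.mulVecLin = LinearMap.id := sub_eq_zero.1 (LinearMap.ker_eq_top.1 hker)
  exact toLin'.injective (this.trans toLin'_one.symm)

end Matrix

/-- For a linear code `U` with trivial hull, generator matrix `G`,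
and parity check matrix `H`, one has `Σ_U + Σ_{U⊥} = 1`, where
`Σ_U = Gᵀ (G Gᵀ)⁻¹ G` and `Σ_{U⊥} = Hᵀ (H Hᵀ)⁻¹ H`. -/
theorem statement6 {F : Type*} [Field F] {n k : ℕ}
    (U : Submodule F (Fin n → F))
    (G : Matrix (Fin k) (Fin n) F) (H : Matrix (Fin (n - k)) (Fin n) F)
    (hGind : LinearIndependent F G)
    (hGspan : Submodule.span F (Set.range G) = U)
    (hHind : LinearIndependent F H)
    (hHspan : Submodule.span F (Set.range H) = dualCode U)
    (hhull : U ⊓ dualCode U = ⊥) :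
    Gᵀ * (G * Gᵀ)⁻¹ * G + Hᵀ * (H * Hᵀ)⁻¹ * H = 1 := by
  have hHG : H * Gᵀ = 0 := mul_transpose_eq_zero_of_mem_dualCode
    (fun j => hGspan ▸ subset_span (mem_range_self j))
    (fun i => hHspan ▸ subset_span (mem_range_self i))
  have hGH : G * Hᵀ = 0 := by simpa using congrArg transpose hHG
  have htop : U ⊔ dualCode U = ⊤ := by
    refine eq_top_of_disjoint _ _ ?_ (disjoint_iff.2 hhull)
    have hk : k ≤ n := by simpa using hGind.fintype_card_le_finrank
    rw [← hHspan, ← hGspan, finrank_span_eq_card hGind, finrank_span_eq_card hHind]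
    simp [hk]
  have hGunit : IsUnit (G * Gᵀ).det :=
    isUnit_det_mul_transpose_of_inf_dualCode_eq_bot G hGind (by rwa [hGspan])
  have hHunit : IsUnit (H * Hᵀ).det :=
    isUnit_det_mul_transpose_of_inf_dualCode_eq_bot H hHind
      (by rw [hHspan]; exact dualCode_inf_dualCode_dualCode_eq_bot htop)
  refine eq_one_of_mul_transpose_eq _ (G := G) (H := H) ?_ ?_ (by rw [hGspan, hHspan, htop])
  · rw [Matrix.add_mul, transpose_mul_inv_mul_mul_transpose hGunit, Matrix.mul_assoc _ H, hHG,
      Matrix.mul_zero, add_zero]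
  · rw [Matrix.add_mul, transpose_mul_inv_mul_mul_transpose hHunit, Matrix.mul_assoc _ G, hGH,
      Matrix.mul_zero, zero_add]
end

section
/- For a linear code U with trivial hull and generator matrix G, the row space (image under row-vector action) of Σ_U = Gᵀ(G·Gᵀ)⁻¹G equals U; in particular rank(Σ_U) = dim U. -/
open Matrix

theorem range_vecMulLinear_mul_of_mul_eq_one {R : Type*} [CommRing R] {m n : Type*}
    [Fintype m] [DecidableEq m] [Fintype n] {G : Matrix m n R} {H : Matrix n m R}
    (hGH : G * H = 1) :
    LinearMap.range (vecMulLinear (H * G)) = LinearMap.range (vecMulLinear G) := by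
  apply le_antisymm
  · rintro _ ⟨v, rfl⟩
    exact ⟨v ᵥ* H, by simp [vecMul_vecMul]⟩
  · rintro _ ⟨c, rfl⟩
    refine ⟨c ᵥ* G, ?_⟩
    simp only [vecMulLinear_apply, vecMul_vecMul, ← Matrix.mul_assoc, hGH, Matrix.one_mul]

section dualCode

variable {F : Type*} [Field F] {n : ℕ} {ι : Type*} [Fintype ι]

theorem span_range_eq_range_vecMulLinear (G : Matrix ι (Fin n) F) :
    Submodule.span F (Set.range G) = LinearMap.range (vecMulLinear G) :=
  (range_vecMulLinear G).symm

theorem mem_dualCode_span_range_iff (G : Matrix ι (Fin n) F) (z : Fin n → F) :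
    z ∈ dualCode (Submodule.span F (Set.range G)) ↔ G *ᵥ z = 0 := by
  have hpair (c : ι → F) : ∑ i, (c ᵥ* G) i * z i = (G *ᵥ z) ⬝ᵥ c := by
    rw [dotProduct_comm, dotProduct_mulVec]
    rfl
  rw [span_range_eq_range_vecMulLinear]
  change (∀ u ∈ LinearMap.range (vecMulLinear G), _) ↔ _
  simp only [LinearMap.mem_range, forall_exists_index, forall_apply_eq_imp_iff,
    vecMulLinear_apply, hpair]
  exact dotProduct_eq_zero_iff

/-- If `v Gᵀ G = 0` then `u = v G` is a codeword orthogonal to every row of `G`, so it lies in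
the hull and vanishes; independence of the rows then forces `v = 0`. -/
theorem isUnit_mul_transpose_of_inf_dualCode_eq_bot [DecidableEq ι] {G : Matrix ι (Fin n) F}
    (hG : LinearIndependent F G)
    (hhull : Submodule.span F (Set.range G) ⊓ dualCode (Submodule.span F (Set.range G)) = ⊥) :
    IsUnit (G * Gᵀ) := by
  rw [← vecMul_injective_iff_isUnit, ← coe_vecMulLinear, injective_iff_map_eq_zero]
  intro v hv
  have hcode : v ᵥ* G ∈ Submodule.span F (Set.range G) := by
    rw [span_range_eq_range_vecMulLinear]
    exact ⟨v, rfl⟩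
  have hdual : v ᵥ* G ∈ dualCode (Submodule.span F (Set.range G)) := by
    rw [mem_dualCode_span_range_iff, ← vecMul_transpose, vecMul_vecMul]
    exact hv
  have hzero : v ᵥ* G = 0 := by
    simpa [hhull] using Submodule.mem_inf.mpr ⟨hcode, hdual⟩
  exact (vecMul_injective_iff.mpr hG) (hzero.trans (zero_vecMul G).symm)

end dualCode

/-- For a linear code `U` with trivial hull and generator matrix `G`,
the row space of `Σ_U = Gᵀ (G Gᵀ)⁻¹ G` (its image under the row-vector action
`v ↦ v Σ_U`) equals `U`; in particular `rank Σ_U = dim U`. -/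
theorem statement8 {F : Type*} [Field F] {n k : ℕ}
    (U : Submodule F (Fin n → F))
    (G : Matrix (Fin k) (Fin n) F)
    (hGind : LinearIndependent F G)
    (hGspan : Submodule.span F (Set.range G) = U)
    (hhull : U ⊓ dualCode U = ⊥) :
    LinearMap.range (Matrix.vecMulLinear (Gᵀ * (G * Gᵀ)⁻¹ * G)) = U ∧
    (Gᵀ * (G * Gᵀ)⁻¹ * G).rank = Module.finrank F U := by
  subst hGspan
  have hdet : IsUnit (G * Gᵀ).det :=
    (isUnit_iff_isUnit_det _).mp (isUnit_mul_transpose_of_inf_dualCode_eq_bot hGind hhull)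
  have hrange : LinearMap.range (vecMulLinear (Gᵀ * (G * Gᵀ)⁻¹ * G)) =
      Submodule.span F (Set.range G) := by
    rw [span_range_eq_range_vecMulLinear]
    exact range_vecMulLinear_mul_of_mul_eq_one (by rw [← Matrix.mul_assoc, mul_nonsing_inv _ hdet])
  refine ⟨hrange, ?_⟩
  rw [rank_eq_finrank_span_row, ← range_vecMulLinear, hrange]
end

section
/- Let U ⊆ F^n be a linear code and let H(U) := U ∩ U⊥ denote its hull. If I ⊆ {1,…,n} is an information set for H(U) (i.e., there is a generator matrix of H(U) whose columns indexed by I form the identity), then the shortened code S_I(U) := {u ∈ U : ∀i ∈ I, uᵢ = 0} satisfies U = S_I(U) ⊕ H(U). -/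
open Matrix

/-- The submodule of vectors vanishing on all coordinates in `I`; the shortened code
`S_I(U)` is then `U ⊓ zeroOn I`. -/
def zeroOn {F : Type*} [Field F] {n : ℕ} (I : Finset (Fin n)) :
    Submodule F (Fin n → F) where
  carrier := {z | ∀ i ∈ I, z i = 0}
  add_mem' := by
    intro a b ha hb i hi
    simp [ha i hi, hb i hi]
  zero_mem' := by intro i hi; simp
  smul_mem' := by
    intro c a ha i hi
    simp [ha i hi]

/-- Let `U ⊆ F^n` be a linear code with hull `H(U) = U ⊓ U⊥`. If `I` is an
information set for `H(U)` (the projection of `H(U)` onto the coordinates in `I` is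
bijective), then the shortened code `S_I(U) = {u ∈ U : ∀ i ∈ I, u i = 0}` satisfies
`U = S_I(U) ⊕ H(U)` (internal direct sum). -/
theorem statement15 {F : Type*} [Field F] {n : ℕ}
    (U : Submodule F (Fin n → F)) (I : Finset (Fin n))
    (hI : Function.Bijective
      (fun (u : ↥(U ⊓ dualCode U)) (i : {x // x ∈ I}) => (u : Fin n → F) i)) :
    (U ⊓ zeroOn I) ⊓ (U ⊓ dualCode U) = ⊥ ∧
    (U ⊓ zeroOn I) ⊔ (U ⊓ dualCode U) = U := by
  constructor
  · rw [eq_bot_iff]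
    rintro x ⟨⟨hxU, hxz⟩, hxH⟩
    have key : (⟨x, hxH⟩ : ↥(U ⊓ dualCode U)) = (0 : ↥(U ⊓ dualCode U)) := by
      apply hI.injective
      funext i
      simpa using hxz i i.2
    have := congrArg Subtype.val key
    simpa using this
  · apply le_antisymm (sup_le inf_le_left inf_le_left)
    intro u hu
    obtain ⟨h, hh⟩ := hI.surjective (fun i => u i)
    refine Submodule.mem_sup.mpr ⟨u - (h : Fin n → F),
      ⟨Submodule.sub_mem _ hu h.2.1, fun i hi => ?_⟩, h, h.2, by abel⟩
    have := congrFun hh ⟨i, hi⟩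
    simp only [Pi.sub_apply]
    simp [this]
end

section
/- Let U ⊆ F^n be a linear code. If I ⊆ {1,…,n} is an information set for the hull H(U) = U ∩ U⊥, then the shortened code S_I(U) := {u ∈ U : ∀i ∈ I, uᵢ = 0} has trivial hull: S_I(U) ∩ S_I(U)⊥ = {0}. -/
open Matrix

/-- Let `U ⊆ F^n` be a linear code. If `I` is an information set for the
hull `H(U) = U ⊓ U⊥`, then the shortened code `S_I(U) = {u ∈ U : ∀ i ∈ I, u i = 0}` has
trivial hull: `S_I(U) ⊓ S_I(U)⊥ = ⊥`. -/
theorem statement16 {F : Type*} [Field F] {n : ℕ}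
    (U : Submodule F (Fin n → F)) (I : Finset (Fin n))
    (hI : Function.Bijective
      (fun (u : ↥(U ⊓ dualCode U)) (i : {x // x ∈ I}) => (u : Fin n → F) i)) :
    (U ⊓ zeroOn I) ⊓ dualCode (U ⊓ zeroOn I) = ⊥ := by
  rw [Submodule.eq_bot_iff]
  intro v hv
  obtain ⟨⟨hvU, hvI⟩, hvD⟩ := hv
  have hvDU : v ∈ dualCode U := by
    intro u hu
    obtain ⟨h, hh⟩ := hI.2 (fun i : {x // x ∈ I} => u i.1)
    have hS : u - (h : Fin n → F) ∈ U ⊓ zeroOn I := by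
      refine ⟨Submodule.sub_mem U hu h.2.1, ?_⟩
      intro i hi
      have := congrFun hh ⟨i, hi⟩
      simp only [Pi.sub_apply]
      simp [this]
    have h1 : ∑ i, (u - (h : Fin n → F)) i * v i = 0 := hvD _ hS
    have h2 : ∑ i, (h : Fin n → F) i * v i = 0 := by
      have h3 := h.2.2 v hvU
      calc ∑ i, (h : Fin n → F) i * v i = ∑ i, v i * (h : Fin n → F) i := by
            exact Finset.sum_congr rfl fun i _ => mul_comm _ _
        _ = 0 := h3
    calc ∑ i, u i * v i
        = (∑ i, (u - (h : Fin n → F)) i * v i) + ∑ i, (h : Fin n → F) i * v i := by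
          rw [← Finset.sum_add_distrib]
          exact Finset.sum_congr rfl fun i _ => by simp [Pi.sub_apply]; ring
      _ = 0 := by rw [h1, h2, add_zero]
  have hvH : v ∈ U ⊓ dualCode U := ⟨hvU, hvDU⟩
  have hz : (⟨v, hvH⟩ : ↥(U ⊓ dualCode U)) = 0 := by
    apply hI.1
    funext i
    simp [hvI i.1 i.2]
  simpa using congrArg Subtype.val hz
end
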